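/- arXiv:math/9901009 — 4 statements merged into one kernel-verified Lean document; each statement's English description precedes it below -/
import Mathlib

section
/- Let R be an associative ring and a_0,...,a_n ∈ R. Let S be the R-algebra generated by elements z, u subject to the relations ∑ a_i z^i = 0, u·(∑ i·a_i z^{i-1}) = 1, and (∑ i·a_i z^{i-1})·u = 1. Then the natural ring homomorphism R → S is formally étale in the category of associative rings: for every surjective ring homomorphism γ: A' → A whose kernel I is a central ideal with I² = 0, and every commutative square with maps δ: R → A' and β: S → A satisfying γ∘δ = β∘α, there exists a unique ring homomorphism ε: S → A' with ε∘α = δ and γ∘ε = β. -/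
/-!
STATEMENT 0: If `S` is the `R`-ring generated by elements `z, u` subject to the relations
`∑ aᵢ zⁱ = 0`, `u * (∑ i aᵢ z^(i-1)) = 1`, `(∑ i aᵢ z^(i-1)) * u = 1`
(expressed via the universal property), then `α : R →+* S` is formally étale in the
category of associative rings.
-/

universe u

lemma pow_add_central {A : Type u} [Ring A] (t h : A)
    (hc : ∀ r, h * r = r * h) (h2 : h * h = 0) :
    ∀ i : ℕ, (t + h) ^ i = t ^ i + i • (t ^ (i - 1) * h) := by
  intro i
  induction i with
  | zero => simp
  | succ i ih =>
    rw [pow_succ, ih]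
    rcases Nat.eq_zero_or_pos i with hi | hi
    · subst hi; simp [mul_add]
    · have ht : t ^ (i - 1) * t = t ^ i := by
        rw [← pow_succ, Nat.sub_add_cancel hi]
      have key : (t ^ (i - 1) * h) * (t + h) = t ^ i * h := by
        rw [mul_add, mul_assoc, hc t, ← mul_assoc, ht, mul_assoc, h2, mul_zero, add_zero]
      rw [add_mul, smul_mul_assoc, key, mul_add, pow_succ]
      rw [succ_nsmul, Nat.succ_sub_one]
      abel

/-- `γ : A' →+* A` is a central extension: surjective, with central square-zero kernel. -/
def IsCentralExtension {A' A : Type u} [Ring A'] [Ring A] (γ : A' →+* A) : Prop :=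
  Function.Surjective γ ∧
    (∀ x : A', γ x = 0 → ∀ r : A', x * r = r * x) ∧
    (∀ x y : A', γ x = 0 → γ y = 0 → x * y = 0)

theorem stmt0 {R S : Type u} [Ring R] [Ring S] (α : R →+* S) (n : ℕ) (a : ℕ → R)
    (z u : S)
    (hrel1 : ∑ i ∈ Finset.range (n + 1), α (a i) * z ^ i = 0)
    (hrel2 : u * ∑ i ∈ Finset.range (n + 1), i • (α (a i) * z ^ (i - 1)) = 1)
    (hrel3 : (∑ i ∈ Finset.range (n + 1), i • (α (a i) * z ^ (i - 1))) * u = 1)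
    -- universal property: `S` is the `R`-ring generated by `z, u` with the above relations
    (huniv : ∀ (T : Type u) [Ring T] (f : R →+* T) (z' u' : T),
      (∑ i ∈ Finset.range (n + 1), f (a i) * z' ^ i = 0) →
      (u' * ∑ i ∈ Finset.range (n + 1), i • (f (a i) * z' ^ (i - 1)) = 1) →
      ((∑ i ∈ Finset.range (n + 1), i • (f (a i) * z' ^ (i - 1))) * u' = 1) →
      ∃! g : S →+* T, g.comp α = f ∧ g z = z' ∧ g u = u') :
    -- conclusion: `α` is formally étale in the category of associative rings
    ∀ (A' A : Type u) [Ring A'] [Ring A] (γ : A' →+* A), IsCentralExtension γ →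
      ∀ (δ : R →+* A') (β : S →+* A), γ.comp δ = β.comp α →
        ∃! ε : S →+* A', ε.comp α = δ ∧ γ.comp ε = β := by
  intro A' A _ _ γ hγ δ β hcomm
  obtain ⟨hsurj, hcent, hsq⟩ := hγ
  have hδβ : ∀ r : R, γ (δ r) = β (α r) := fun r => RingHom.congr_fun hcomm r
  -- abbreviations for the "polynomial" and its "derivative" over A'
  set F : A' → A' := fun t => ∑ i ∈ Finset.range (n + 1), δ (a i) * t ^ i with hF
  set F' : A' → A' := fun t => ∑ i ∈ Finset.range (n + 1), i • (δ (a i) * t ^ (i - 1)) with hF'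
  -- image of the derivative in A
  set W : A := β (∑ i ∈ Finset.range (n + 1), i • (α (a i) * z ^ (i - 1))) with hW
  have hγF : ∀ t : A', γ t = β z → γ (F t) = 0 := by
    intro t ht
    have : γ (F t) = β (∑ i ∈ Finset.range (n + 1), α (a i) * z ^ i) := by
      rw [map_sum, map_sum]
      refine Finset.sum_congr rfl fun i _ => ?_
      rw [map_mul, map_mul, map_pow, map_pow, hδβ, ht]
    rw [this, hrel1, map_zero]
  have hγF' : ∀ t : A', γ t = β z → γ (F' t) = W := by
    intro t ht
    rw [hW, map_sum, map_sum]
    refine Finset.sum_congr rfl fun i _ => ?_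
    rw [map_nsmul, map_nsmul, map_mul, map_mul, map_pow, map_pow, hδβ, ht]
  have hbuW : β u * W = 1 := by rw [hW, ← map_mul, hrel2, map_one]
  have hWbu : W * β u = 1 := by rw [hW, ← map_mul, hrel3, map_one]
  -- Taylor expansion to first order
  have hTaylor : ∀ t h : A', γ h = 0 → F (t + h) = F t + F' t * h := by
    intro t h hh
    have hc : ∀ r, h * r = r * h := hcent h hh
    have h2 : h * h = 0 := hsq h h hh hh
    have hstep : F (t + h) =
        ∑ i ∈ Finset.range (n + 1),
          (δ (a i) * t ^ i + (i • (δ (a i) * t ^ (i - 1))) * h) := by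
      refine Finset.sum_congr rfl fun i _ => ?_
      rw [pow_add_central t h hc h2 i, mul_add, mul_smul_comm, ← mul_assoc, ← smul_mul_assoc]
    rw [hstep, Finset.sum_add_distrib]
    simp only [hF, hF', Finset.sum_mul]
  -- choose preimages
  obtain ⟨z₀, hz₀⟩ := hsurj (β z)
  obtain ⟨u₀, hu₀⟩ := hsurj (β u)
  have hFz₀ : γ (F z₀) = 0 := hγF z₀ hz₀
  -- Newton step
  have hγnh : γ (-(u₀ * F z₀)) = 0 := by rw [map_neg, map_mul, hFz₀, mul_zero, neg_zero]
  set z₁ : A' := z₀ + -(u₀ * F z₀) with hz₁def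
  have hγz₁ : γ z₁ = β z := by rw [hz₁def, map_add, hγnh, hz₀, add_zero]
  have hFz₁ : F z₁ = 0 := by
    rw [hz₁def, hTaylor z₀ _ hγnh]
    have he : γ (F' z₀ * u₀ - 1) = 0 := by
      rw [map_sub, map_mul, hu₀, hγF' z₀ hz₀, hWbu, map_one, sub_self]
    have h1 : F' z₀ * (u₀ * F z₀) = F z₀ := by
      rw [← mul_assoc]
      have hsplit : F' z₀ * u₀ = 1 + (F' z₀ * u₀ - 1) := by abel
      rw [hsplit, add_mul, one_mul, hsq _ _ he hFz₀, add_zero]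
    rw [mul_neg, h1, add_neg_cancel]
  -- invert the derivative at z₁
  have hγF'z₁ : γ (F' z₁) = W := hγF' z₁ hγz₁
  have he₁ : γ (u₀ * F' z₁ - 1) = 0 := by
    rw [map_sub, map_mul, hu₀, hγF'z₁, hbuW, map_one, sub_self]
  have he₂ : γ (F' z₁ * u₀ - 1) = 0 := by
    rw [map_sub, map_mul, hu₀, hγF'z₁, hWbu, map_one, sub_self]
  set e₁ : A' := u₀ * F' z₁ - 1 with he₁def
  set e₂ : A' := F' z₁ * u₀ - 1 with he₂def
  set l : A' := (1 - e₁) * u₀ with hldef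
  set r : A' := u₀ * (1 - e₂) with hrdef
  have hlw : l * F' z₁ = 1 := by
    have h1 : u₀ * F' z₁ = 1 + e₁ := by rw [he₁def]; abel
    have h2 : e₁ * e₁ = 0 := hsq _ _ he₁ he₁
    have : l * F' z₁ = (1 - e₁) * (1 + e₁) := by rw [hldef, mul_assoc, h1]
    rw [this]
    have expand : (1 - e₁) * (1 + e₁) = 1 - e₁ * e₁ := by noncomm_ring
    rw [expand, h2, sub_zero]
  have hwr : F' z₁ * r = 1 := by
    have h1 : F' z₁ * u₀ = 1 + e₂ := by rw [he₂def]; abel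
    have h2 : e₂ * e₂ = 0 := hsq _ _ he₂ he₂
    have : F' z₁ * r = (1 + e₂) * (1 - e₂) := by rw [hrdef, ← mul_assoc, h1]
    rw [this]
    have expand : (1 + e₂) * (1 - e₂) = 1 - e₂ * e₂ := by noncomm_ring
    rw [expand, h2, sub_zero]
  have hlr : l = r := by
    calc l = l * (F' z₁ * r) := by rw [hwr, mul_one]
    _ = (l * F' z₁) * r := (mul_assoc l (F' z₁) r).symm
    _ = r := by rw [hlw, one_mul]
  have hwl : F' z₁ * l = 1 := by rw [hlr, hwr]
  have hγl : γ l = β u := by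
    rw [hldef, map_mul, map_sub, map_one, he₁, sub_zero, one_mul, hu₀]
  -- apply the universal property over A'
  obtain ⟨ε, ⟨hεα, hεz, hεu⟩, hεuniq⟩ := huniv A' δ z₁ l hFz₁ hlw hwl
  -- the lifted map satisfies γ ∘ ε = β, via uniqueness over A
  have hr1A : ∑ i ∈ Finset.range (n + 1), (γ.comp δ) (a i) * (β z) ^ i = 0 := by
    have : ∑ i ∈ Finset.range (n + 1), (γ.comp δ) (a i) * (β z) ^ i
        = β (∑ i ∈ Finset.range (n + 1), α (a i) * z ^ i) := by
      rw [map_sum]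
      refine Finset.sum_congr rfl fun i _ => ?_
      rw [map_mul, map_pow, RingHom.comp_apply, hδβ]
    rw [this, hrel1, map_zero]
  have hsumA : ∑ i ∈ Finset.range (n + 1), i • ((γ.comp δ) (a i) * (β z) ^ (i - 1))
      = β (∑ i ∈ Finset.range (n + 1), i • (α (a i) * z ^ (i - 1))) := by
    rw [map_sum]
    refine Finset.sum_congr rfl fun i _ => ?_
    rw [map_nsmul, map_mul, map_pow, RingHom.comp_apply, hδβ]
  have hr2A : β u * ∑ i ∈ Finset.range (n + 1), i • ((γ.comp δ) (a i) * (β z) ^ (i - 1)) = 1 := by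
    rw [hsumA, ← map_mul, hrel2, map_one]
  have hr3A : (∑ i ∈ Finset.range (n + 1), i • ((γ.comp δ) (a i) * (β z) ^ (i - 1))) * β u = 1 := by
    rw [hsumA, ← map_mul, hrel3, map_one]
  obtain ⟨g, _, hguniq⟩ := huniv A (γ.comp δ) (β z) (β u) hr1A hr2A hr3A
  have hβg : β = g := hguniq β ⟨hcomm.symm, rfl, rfl⟩
  have hγεg : γ.comp ε = g := by
    refine hguniq (γ.comp ε) ⟨?_, ?_, ?_⟩
    · rw [RingHom.comp_assoc, hεα]
    · show γ (ε z) = β z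
      rw [hεz, hγz₁]
    · show γ (ε u) = β u
      rw [hεu, hγl]
  refine ⟨ε, ⟨hεα, by rw [hγεg, hβg]⟩, ?_⟩
  -- uniqueness
  rintro ε' ⟨hε'α, hγε'⟩
  have hε'a : ∀ i, ε' (α (a i)) = δ (a i) := fun i => RingHom.congr_fun hε'α (a i)
  have hF1' : F (ε' z) = 0 := by
    have := congrArg ε' hrel1
    rw [map_sum, map_zero] at this
    rw [hF]
    simp only []
    rw [← this]
    refine Finset.sum_congr rfl fun i _ => ?_
    rw [map_mul, map_pow, hε'a]
  have hF2' : ε' u * F' (ε' z) = 1 := by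
    have := congrArg ε' hrel2
    rw [map_mul, map_sum, map_one] at this
    rw [← this]
    congr 1
    refine Finset.sum_congr rfl fun i _ => ?_
    rw [map_nsmul, map_mul, map_pow, hε'a]
  have hγε'z : γ (ε' z) = β z := by
    have := RingHom.congr_fun hγε' z
    exact this
  have hd : γ (ε' z - z₁) = 0 := by
    rw [map_sub, hγε'z, hγz₁, sub_self]
  have hzeq : ε' z = z₁ := by
    have hdecomp : ε' z = z₁ + (ε' z - z₁) := by abel
    have h0 : F (ε' z) = F z₁ + F' z₁ * (ε' z - z₁) := by
      conv_lhs => rw [hdecomp]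
      exact hTaylor z₁ _ hd
    rw [hF1', hFz₁, zero_add] at h0
    have : ε' z - z₁ = 0 := by
      calc ε' z - z₁ = (l * F' z₁) * (ε' z - z₁) := by rw [hlw, one_mul]
      _ = l * (F' z₁ * (ε' z - z₁)) := mul_assoc l (F' z₁) (ε' z - z₁)
      _ = 0 := by rw [← h0, mul_zero]
    exact sub_eq_zero.mp this
  have hueq : ε' u = l := by
    have h2 : ε' u * F' z₁ = 1 := by rw [← hzeq]; exact hF2'
    calc ε' u = ε' u * (F' z₁ * l) := by rw [hwl, mul_one]
    _ = (ε' u * F' z₁) * l := (mul_assoc (ε' u) (F' z₁) l).symm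
    _ = l := by rw [h2, one_mul]
  exact hεuniq ε' ⟨hε'α, hzeq, hueq⟩
end

section
/- Let γ: A' → A be a surjective ring homomorphism with kernel I such that I is central in A' and I² = 0. Given x, y ∈ A' and elements b_0,...,b_n ∈ A' such that in A the images satisfy ∑ γ(b_i)γ(x)^i = 0, γ(y)·∑ i·γ(b_i)γ(x)^{i-1} = 1, and ∑ i·γ(b_i)γ(x)^{i-1}·γ(y) = 1, there exist unique elements p, q ∈ I such that ∑ b_i(x+p)^i = 0, (y+q)·∑ i·b_i(x+p)^{i-1} = 1, and ∑ i·b_i(x+p)^{i-1}·(y+q) = 1; explicitly, p = -y·∑ b_i x^i and q = y·(1 - ∑ i·b_i(x+p)^{i-1}·y). -/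
/-!
STATEMENT 1: Lifting the standard étale relations along a central square-zero extension:
existence and uniqueness of the correcting elements `p, q` in the kernel, with explicit
formulas `p = -y ∑ bᵢ xⁱ` and `q = y (1 - (∑ i bᵢ (x+p)^(i-1)) y)`.
-/

universe u

theorem stmt1 {A' A : Type u} [Ring A'] [Ring A] (γ : A' →+* A)
    (hsurj : Function.Surjective γ)
    (hcentral : ∀ x : A', γ x = 0 → ∀ r : A', x * r = r * x)
    (hsq : ∀ x y : A', γ x = 0 → γ y = 0 → x * y = 0)
    (n : ℕ) (x y : A') (b : ℕ → A')
    (h1 : ∑ i ∈ Finset.range (n + 1), γ (b i) * γ x ^ i = 0)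
    (h2 : γ y * ∑ i ∈ Finset.range (n + 1), i • (γ (b i) * γ x ^ (i - 1)) = 1)
    (h3 : (∑ i ∈ Finset.range (n + 1), i • (γ (b i) * γ x ^ (i - 1))) * γ y = 1) :
    (∃! pq : A' × A', γ pq.1 = 0 ∧ γ pq.2 = 0 ∧
      (∑ i ∈ Finset.range (n + 1), b i * (x + pq.1) ^ i = 0) ∧
      ((y + pq.2) * ∑ i ∈ Finset.range (n + 1), i • (b i * (x + pq.1) ^ (i - 1)) = 1) ∧
      ((∑ i ∈ Finset.range (n + 1), i • (b i * (x + pq.1) ^ (i - 1))) * (y + pq.2) = 1)) ∧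
    -- the explicit solution
    (let p : A' := -(y * ∑ i ∈ Finset.range (n + 1), b i * x ^ i);
     let q : A' := y * (1 - (∑ i ∈ Finset.range (n + 1), i • (b i * (x + p) ^ (i - 1))) * y);
     γ p = 0 ∧ γ q = 0 ∧
      (∑ i ∈ Finset.range (n + 1), b i * (x + p) ^ i = 0) ∧
      ((y + q) * ∑ i ∈ Finset.range (n + 1), i • (b i * (x + p) ^ (i - 1)) = 1) ∧
      ((∑ i ∈ Finset.range (n + 1), i • (b i * (x + p) ^ (i - 1))) * (y + q) = 1)) := by
  -- absorption lemmas: kernel elements absorb "unit-like" elements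
  -- absorption lemmas: kernel elements absorb "unit-like" elements
  have habs : ∀ u w : A', γ u = 0 → γ w = 1 → u * w = u := by
    intro u w hu hw
    have h := hsq u (w - 1) hu (by simp [hw])
    have h2 : u * (w - 1) = u * w - u := by noncomm_ring
    rw [h2] at h
    exact sub_eq_zero.mp h
  have habs' : ∀ u w : A', γ u = 0 → γ w = 1 → w * u = u := by
    intro u w hu hw
    have h := hsq (w - 1) u (by simp [hw]) hu
    have h2 : (w - 1) * u = w * u - u := by noncomm_ring
    rw [h2] at h
    exact sub_eq_zero.mp h
  -- square of an element mapping to 1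
  have hsq1 : ∀ w : A', γ w = 1 → w * w = 2 * w - 1 := by
    intro w hw
    have h := hsq (w - 1) (w - 1) (by simp [hw]) (by simp [hw])
    have h2 : (w - 1) * (w - 1) = w * w - 2 * w + 1 := by noncomm_ring
    rw [h2] at h
    have h4 : w * w - (2 * w - 1) = 0 := by
      rw [show w * w - (2 * w - 1) = w * w - 2 * w + 1 by noncomm_ring]; exact h
    exact sub_eq_zero.mp h4
  -- binomial expansion for a central square-zero correction
  have hpow : ∀ p : A', γ p = 0 → ∀ i : ℕ,
      (x + p) ^ i = x ^ i + i • (p * x ^ (i - 1)) := by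
    intro p hp i
    induction i with
    | zero => simp
    | succ i ih =>
      rcases Nat.eq_zero_or_pos i with h0 | h0
      · subst h0; simp [pow_succ, hcentral p hp x]
      · have hi : i - 1 + 1 = i := Nat.succ_pred_eq_of_pos h0
        have hxp : x ^ i * p = p * x ^ i := (hcentral p hp (x ^ i)).symm
        have hpp : (p * x ^ (i - 1)) * p = 0 := by
          rw [mul_assoc, ← hcentral p hp (x ^ (i-1)), ← mul_assoc,
            hsq p p hp hp, zero_mul]
        have hxx : (p * x ^ (i - 1)) * x = p * x ^ i := by
          rw [mul_assoc, ← pow_succ, hi]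
        rw [pow_succ, ih, add_mul, mul_add, mul_add, smul_mul_assoc,
          smul_mul_assoc, hpp, hxx, smul_zero, add_zero, ← pow_succ, hxp]
        rw [Nat.add_sub_cancel, succ_nsmul]
        abel
  -- the two key sums at x
  set F : A' := ∑ i ∈ Finset.range (n + 1), b i * x ^ i with hF
  set F' : A' := ∑ i ∈ Finset.range (n + 1), i • (b i * x ^ (i - 1)) with hF'
  have hgF : γ F = 0 := by
    rw [hF, map_sum]; simpa using h1
  have hgF' : γ F' = ∑ i ∈ Finset.range (n + 1), i • (γ (b i) * γ x ^ (i - 1)) := by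
    rw [hF', map_sum]; simp
  have hgyF' : γ (y * F') = 1 := by rw [map_mul, hgF']; exact h2
  have hgF'y : γ (F' * y) = 1 := by rw [map_mul, hgF']; exact h3
  -- expansion of the polynomial sum at x + p
  have hsum : ∀ p : A', γ p = 0 →
      ∑ i ∈ Finset.range (n + 1), b i * (x + p) ^ i = F + p * F' := by
    intro p hp
    have : ∀ i ∈ Finset.range (n + 1),
        b i * (x + p) ^ i = b i * x ^ i + p * (i • (b i * x ^ (i - 1))) := by
      intro i _
      have hc : b i * p = p * b i := (hcentral p hp (b i)).symm
      rw [hpow p hp i, mul_add, mul_smul_comm, mul_smul_comm, ← mul_assoc, hc,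
        mul_assoc]
    rw [Finset.sum_congr rfl this, Finset.sum_add_distrib, ← Finset.mul_sum, hF, hF']
  -- the derivative sum at x + p has the same image as at x
  have hder : ∀ p : A', γ p = 0 →
      γ (∑ i ∈ Finset.range (n + 1), i • (b i * (x + p) ^ (i - 1)))
        = ∑ i ∈ Finset.range (n + 1), i • (γ (b i) * γ x ^ (i - 1)) := by
    intro p hp
    rw [map_sum]
    refine Finset.sum_congr rfl fun i _ => ?_
    have : γ (x + p) = γ x := by simp [hp]
    simp [this]
  -- any kernel element annihilated by F' (resp. s) is zero
  have hkill : ∀ d : A', γ d = 0 → d * F' = 0 → d = 0 := by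
    intro d hd hdF
    have h1' : d * (y * F') = d := habs d (y * F') hd hgyF'
    rw [← mul_assoc, hcentral d hd y, mul_assoc, hdF, mul_zero] at h1'
    exact h1'.symm
  -- THE EXPLICIT p
  set P : A' := -(y * F) with hP
  have hgP : γ P = 0 := by rw [hP]; simp [hgF]
  -- F is killed: F + P * F' = 0
  have hPF : F + P * F' = 0 := by
    have hc : F * F' = F' * F := hcentral F hgF F'
    have : P * F' = -(y * (F * F')) := by rw [hP]; noncomm_ring
    rw [this, hc, ← mul_assoc]
    have := habs' F (y * F') hgF hgyF'
    rw [this]; simp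
  have hPzero : ∑ i ∈ Finset.range (n + 1), b i * (x + P) ^ i = 0 := by
    rw [hsum P hgP, hPF]
  -- the derivative sum at x + P
  set s : A' := ∑ i ∈ Finset.range (n + 1), i • (b i * (x + P) ^ (i - 1)) with hs
  have hgys : γ (y * s) = 1 := by rw [map_mul, hs, hder P hgP]; exact h2
  have hgsy : γ (s * y) = 1 := by rw [map_mul, hs, hder P hgP]; exact h3
  -- THE EXPLICIT q
  set Q : A' := y * (1 - s * y) with hQ
  have hgQ : γ Q = 0 := by
    rw [hQ, map_mul, map_sub, map_one]
    have : γ (s * y) = 1 := hgsy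
    rw [this, sub_self, mul_zero]
  have hQleft : (y + Q) * s = 1 := by
    have hu : (y * s) * (y * s) = 2 * (y * s) - 1 := hsq1 (y * s) hgys
    have expand : (y + Q) * s = y * s + (y * s - (y * s) * (y * s)) := by
      rw [hQ]; noncomm_ring
    rw [expand, hu]; noncomm_ring
  have hQright : s * (y + Q) = 1 := by
    have hv : (s * y) * (s * y) = 2 * (s * y) - 1 := hsq1 (s * y) hgsy
    have expand : s * (y + Q) = s * y + (s * y - (s * y) * (s * y)) := by
      rw [hQ]; noncomm_ring
    rw [expand, hv]; noncomm_ring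
  -- uniqueness helper for q: kernel element annihilating s on the left is zero
  have hkill' : ∀ e : A', γ e = 0 → e * s = 0 → e = 0 := by
    intro e he hes
    have h1' : e * (s * y) = e := habs e (s * y) he hgsy
    rw [← mul_assoc, hes, zero_mul] at h1'
    exact h1'.symm
  constructor
  · refine ⟨(P, Q), ⟨hgP, hgQ, hPzero, hQleft, hQright⟩, ?_⟩
    rintro ⟨p', q'⟩ ⟨hp', hq', hz', hl', _hr'⟩
    -- first p' = P
    have hsum' : F + p' * F' = 0 := by rw [← hsum p' hp']; exact hz'
    have hd : (p' - P) * F' = 0 := by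
      have heq : p' * F' = P * F' := (add_right_inj F).mp (hsum'.trans hPF.symm)
      rw [sub_mul, heq, sub_self]
    have hpP : p' = P :=
      sub_eq_zero.mp (hkill (p' - P) (by rw [map_sub, hp', hgP, sub_self]) hd)
    subst hpP
    -- now q' = Q
    have hl'' : (y + q') * s = 1 := by rw [hs]; exact hl'
    have he : (q' - Q) * s = 0 := by
      rw [sub_mul]
      have e1 : q' * s = 1 - y * s :=
        eq_sub_of_add_eq' (by rw [← add_mul]; exact hl'')
      have e2 : Q * s = 1 - y * s :=
        eq_sub_of_add_eq' (by rw [← add_mul]; exact hQleft)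
      rw [e1, e2, sub_self]
    have hqQ : q' = Q :=
      sub_eq_zero.mp (hkill' (q' - Q) (by rw [map_sub, hq', hgQ, sub_self]) he)
    rw [hqQ]
  · refine ⟨hgP, ?_, hPzero, ?_, ?_⟩
    · exact hgQ
    · exact hQleft
    · exact hQright
end

section
/- Let A be a left and right noetherian ring, t ∈ A a central non-zero-divisor such that A is complete, i.e. A ≅ proj.lim A/t^nA. Let M be a finitely generated left A-module such that t is not a zero divisor on M and M/tM is a free A/tA-module of rank 1. Then M is a free A-module of rank 1. -/
/-!
STATEMENT 7: Let `A` be a left and right noetherian ring, `t ∈ A` a central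
non-zero-divisor with `A` complete in the `t`-adic topology (`A ≅ lim A/tⁿA`).
If `M` is a finitely generated left `A`-module on which `t` acts injectively and
`M/tM` is free of rank 1 over `A/tA`, then `M` is a free `A`-module of rank 1.
-/

universe u v

theorem stmt7 (A : Type u) [Ring A] [IsNoetherianRing A] [IsNoetherianRing Aᵐᵒᵖ]
    (t : A)
    (hcentral : ∀ a : A, t * a = a * t)
    (hreg : ∀ a : A, t * a = 0 → a = 0)
    -- `A` is `t`-adically separated and complete, i.e. `A ≅ proj.lim A/tⁿA`
    (hsep : ∀ x : A, (∀ n : ℕ, ∃ y : A, x = t ^ n * y) → x = 0)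
    (hcomplete : ∀ f : ℕ → A, (∀ n : ℕ, ∃ y : A, f (n + 1) - f n = t ^ n * y) →
      ∃ x : A, ∀ n : ℕ, ∃ y : A, x - f n = t ^ n * y)
    (M : Type v) [AddCommGroup M] [Module A M] [Module.Finite A M]
    -- `t` is not a zero divisor on `M`
    (hMreg : ∀ x : M, t • x = 0 → x = 0)
    -- `M/tM` is a free `A/tA`-module of rank 1, with generator the image of `m₀`
    (m₀ : M)
    (hgen : ∀ x : M, ∃ (a : A) (y : M), x = a • m₀ + t • y)
    (hfree : ∀ a : A, (∃ y : M, a • m₀ = t • y) → ∃ b : A, a = t * b) :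
    -- `M` is a free `A`-module of rank 1
    ∃ m : M, Function.Bijective (fun a : A => a • m) := by
  have hc : ∀ b : A, Commute t b := fun b => hcentral b
  -- powers of t are regular on M
  have hpowregM : ∀ (n : ℕ) (x : M), t ^ n • x = 0 → x = 0 := by
    intro n
    induction n with
    | zero => intro x hx; simpa using hx
    | succ n ih =>
      intro x hx
      apply ih
      apply hMreg
      rw [← mul_smul, ← pow_succ']
      exact hx
  -- 1 - t * a is left-invertible for every a
  have hinv : ∀ a : A, ∃ u : A, u * (1 - t * a) = 1 := by
    intro a
    have hpow : ∀ n : ℕ, (t * a) ^ n = t ^ n * a ^ n := fun n => (hc a).mul_pow n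
    have hdiff : ∀ n : ℕ, ∃ y : A,
        (∑ i ∈ Finset.range (n + 1), (t * a) ^ i) - (∑ i ∈ Finset.range n, (t * a) ^ i)
          = t ^ n * y := by
      intro n
      refine ⟨a ^ n, ?_⟩
      rw [Finset.sum_range_succ, add_sub_cancel_left, hpow]
    obtain ⟨u, hu⟩ := hcomplete (fun n => ∑ i ∈ Finset.range n, (t * a) ^ i) hdiff
    refine ⟨u, ?_⟩
    have key : u * (1 - t * a) - 1 = 0 := by
      apply hsep
      intro n
      obtain ⟨y, hy⟩ := hu n
      refine ⟨y * (1 - t * a) - a ^ n, ?_⟩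
      have hu' : u = (∑ i ∈ Finset.range n, (t * a) ^ i) + t ^ n * y := by
        rw [← hy]; abel
      have hgeo : (∑ i ∈ Finset.range n, (t * a) ^ i) * (1 - t * a)
          = 1 - t ^ n * a ^ n := by
        have := geom_sum_mul (t * a) n
        have h2 : (∑ i ∈ Finset.range n, (t * a) ^ i) * (1 - t * a)
            = -((∑ i ∈ Finset.range n, (t * a) ^ i) * (t * a - 1)) := by
          noncomm_ring
        rw [h2, this, hpow]; noncomm_ring
      rw [hu', add_mul, hgeo]
      noncomm_ring
    exact sub_eq_zero.mp key
  -- injectivity: a • m₀ = 0 → a = 0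
  have hinj : ∀ a : A, a • m₀ = 0 → a = 0 := by
    intro a ha
    apply hsep
    intro n
    have key : ∀ n : ℕ, ∃ b : A, a = t ^ n * b ∧ b • m₀ = 0 := by
      intro n
      induction n with
      | zero => exact ⟨a, by simp, ha⟩
      | succ n ih =>
        obtain ⟨b, hb1, hb2⟩ := ih
        obtain ⟨c, hc'⟩ := hfree b ⟨0, by rw [hb2, smul_zero]⟩
        refine ⟨c, ?_, ?_⟩
        · rw [hb1, hc', ← mul_assoc, ← pow_succ]
        · apply hMreg; rw [← mul_smul, ← hc', hb2]
    obtain ⟨b, hb, -⟩ := key n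
    exact ⟨b, hb⟩
  -- M is t-adically separated
  have hsepM : ∀ x : M, (∀ n : ℕ, ∃ y : M, x = t ^ n • y) → x = 0 := by
    intro x hx
    choose y hy using hx
    have hstep : ∀ n : ℕ, y n = t • y (n + 1) := by
      intro n
      have h1 : t ^ n • (y n - t • y (n + 1)) = 0 := by
        rw [smul_sub, ← mul_smul, ← pow_succ, ← hy (n + 1), ← hy n, sub_self]
      exact sub_eq_zero.mp (hpowregM n _ h1)
    have hmono : Monotone (fun n : ℕ => Submodule.span A {y n}) := by
      apply monotone_nat_of_le_succ
      intro n
      rw [Submodule.span_le, Set.singleton_subset_iff]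
      exact Submodule.mem_span_singleton.mpr ⟨t, (hstep n).symm⟩
    obtain ⟨n, hn⟩ := monotone_stabilizes_iff_noetherian.mpr inferInstance
      ⟨fun n : ℕ => Submodule.span A {y n}, hmono⟩
    have hmem : y (n + 1) ∈ Submodule.span A {y n} := by
      have h2 := hn (n + 1) (Nat.le_succ n)
      simp only [OrderHom.coe_mk] at h2
      rw [h2]
      exact Submodule.mem_span_singleton_self _
    obtain ⟨a, ha⟩ := Submodule.mem_span_singleton.mp hmem
    have hx1 : x = (t * a) • x := by
      calc x = t ^ (n + 1) • y (n + 1) := hy (n + 1)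
        _ = t ^ (n + 1) • (a • y n) := by rw [ha]
        _ = (t ^ (n + 1) * a) • y n := by rw [mul_smul]
        _ = ((t * a) * t ^ n) • y n := by
            rw [pow_succ', mul_assoc, ((hc a).pow_left n).eq, ← mul_assoc]
        _ = (t * a) • (t ^ n • y n) := by rw [mul_smul]
        _ = (t * a) • x := by rw [← hy n]
    obtain ⟨u, hu⟩ := hinv a
    calc x = (1 : A) • x := (one_smul A x).symm
      _ = (u * (1 - t * a)) • x := by rw [hu]
      _ = u • ((1 - t * a) • x) := mul_smul _ _ _
      _ = u • (x - (t * a) • x) := by rw [sub_smul, one_smul]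
      _ = u • (0 : M) := by rw [← hx1, sub_self]
      _ = 0 := smul_zero u
  -- surjectivity
  have hsurj : ∀ x : M, ∃ a : A, a • m₀ = x := by
    intro x
    choose b z hbz using hgen
    let p : ℕ → A × M := fun n =>
      Nat.rec ((0 : A), x) (fun n q => (q.1 + t ^ n * b q.2, z q.2)) n
    have hp0 : p 0 = ((0 : A), x) := rfl
    have hpS : ∀ n : ℕ, p (n + 1) = ((p n).1 + t ^ n * b (p n).2, z (p n).2) :=
      fun n => rfl
    have hp : ∀ n : ℕ, x = (p n).1 • m₀ + t ^ n • (p n).2 := by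
      intro n
      induction n with
      | zero => simp [hp0]
      | succ n ih =>
        rw [hpS n]
        calc x = (p n).1 • m₀ + t ^ n • (p n).2 := ih
          _ = (p n).1 • m₀ + t ^ n • (b (p n).2 • m₀ + t • z (p n).2) := by
              rw [← hbz (p n).2]
          _ = ((p n).1 + t ^ n * b (p n).2) • m₀ + t ^ (n + 1) • z (p n).2 := by
              rw [smul_add, add_smul, mul_smul, pow_succ, mul_smul]
              abel
    have hdiff : ∀ n : ℕ, ∃ y : A, (p (n + 1)).1 - (p n).1 = t ^ n * y := by
      intro n
      refine ⟨b (p n).2, ?_⟩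
      rw [hpS n]
      exact add_sub_cancel_left _ _
    obtain ⟨c, hcs⟩ := hcomplete (fun n => (p n).1) hdiff
    refine ⟨c, ?_⟩
    have : c • m₀ - x = 0 := by
      apply hsepM
      intro n
      obtain ⟨w, hw⟩ := hcs n
      refine ⟨w • m₀ - (p n).2, ?_⟩
      have hc' : c = (p n).1 + t ^ n * w := by rw [← hw]; abel
      calc c • m₀ - x
          = ((p n).1 + t ^ n * w) • m₀ - ((p n).1 • m₀ + t ^ n • (p n).2) := by
            rw [← hc', ← hp n]
        _ = t ^ n • (w • m₀ - (p n).2) := by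
            rw [add_smul, mul_smul, smul_sub]
            abel
    exact sub_eq_zero.mp this
  refine ⟨m₀, ?_, ?_⟩
  · intro a b hab
    have : (a - b) • m₀ = 0 := by
      rw [sub_smul, sub_eq_zero]
      exact hab
    exact sub_eq_zero.mp (hinj _ this)
  · intro x
    exact hsurj x
end

section
/- Let X be a smooth variety over a field k and E a locally free O_X-module of finite rank. Then there is a canonical isomorphism Ext¹_{O_{X×X}}(Δ_*E, Δ_*O_X) ≅ Hom_{O_X}(E, T_X) ⊕ Ext¹_{O_X}(E, O_X), where Δ: X → X×X is the diagonal embedding and T_X the tangent sheaf. -/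
/-!
STATEMENT 8: For a smooth variety `X` over a field `k` and a locally free `O_X`-module
`E` of finite rank, there is a canonical isomorphism
`Ext¹_{O_{X×X}}(Δ_*E, Δ_*O_X) ≅ Hom_{O_X}(E, T_X) ⊕ Ext¹_{O_X}(E, O_X)`.

We formalize the affine case: `X = Spec R` with `R` a (formally) smooth `k`-algebra of
finite type, `X × X = Spec (R ⊗[k] R)`, the diagonal corresponding to the multiplication
map `R ⊗[k] R → R`, `E` a finitely generated projective `R`-module, and
`T_X = Der_k(R)`. The conclusion asserts an isomorphism of abelian groups
`Ext¹_{R⊗R}(Δ_*E, Δ_*R) ≅ Hom_R(E, Der_k(R)) × Ext¹_R(E, R)`.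
-/

open CategoryTheory Opposite TensorProduct

universe u

noncomputable section
namespace Stmt8
set_option linter.unusedSectionVars false

variable (k : Type u) [Field k] (R : Type u) [CommRing R] [Algebra k R]
variable (E : Type u) [AddCommGroup E] [Module R E] [Module.Projective R E]

abbrev mu : (R ⊗[k] R) →+* R := (Algebra.TensorProduct.lmul' k (S := R)).toRingHom
@[simp] lemma mu_tmul (a b : R) : mu k R (a ⊗ₜ b) = a * b := by
  simp [mu, Algebra.TensorProduct.lmul'_apply_tmul]
def tee (r : R) : R ⊗[k] R := (1:R) ⊗ₜ r - r ⊗ₜ (1:R)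
@[simp] lemma mu_tee (r : R) : mu k R (tee k R r) = 0 := by simp [tee]
def muR : (R ⊗[k] R) →ₗ[R] R :=
  AlgebraTensorModule.lift
    (LinearMap.toSpanSingleton R (R →ₗ[k] R) ((LinearMap.id : R →ₗ[R] R).restrictScalars k))
@[simp] lemma muR_tmul (a b : R) : muR k R (a ⊗ₜ b) = a * b := by simp [muR]
lemma muR_eq (w : R ⊗[k] R) : muR k R w = mu k R w := by
  induction w using TensorProduct.induction_on with
  | zero => simp
  | tmul a b => simp
  | add x y hx hy => simp [hx, hy]
def Bmap : (R ⊗[k] R) →ₗ[R] (E →ₗ[R] E) := (LinearMap.lsmul R E).comp (muR k R)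
@[simp] lemma Bmap_apply (w : R ⊗[k] R) (e : E) : Bmap k R E w e = mu k R w • e := by
  simp [Bmap, muR_eq]
def piR : ((R ⊗[k] R) ⊗[R] E) →ₗ[R] E := TensorProduct.lift (Bmap k R E)
@[simp] lemma piR_tmul (w : R ⊗[k] R) (e : E) : piR k R E (w ⊗ₜ e) = mu k R w • e := by
  simp [piR]
lemma piR_smul (s : R ⊗[k] R) (x : (R ⊗[k] R) ⊗[R] E) :
    piR k R E (s • x) = mu k R s • piR k R E x := by
  induction x using TensorProduct.induction_on with
  | zero => simp
  | tmul w e => rw [smul_tmul', smul_eq_mul, piR_tmul, piR_tmul, map_mul, mul_smul]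
  | add x y hx hy => simp [smul_add, hx, hy]
lemma piR_surjective : Function.Surjective (piR k R E) := fun e =>
  ⟨(1:R ⊗[k] R) ⊗ₜ e, by rw [piR_tmul]; simp⟩

----------------------------------------------------------------
-- ModuleCat layer

/-- `Δ_* E` -/
def DE : ModuleCat.{u} (R ⊗[k] R) := (ModuleCat.restrictScalars (mu k R)).obj (ModuleCat.of R E)
/-- `Δ_* O_X` -/
def DO : ModuleCat.{u} (R ⊗[k] R) := (ModuleCat.restrictScalars (mu k R)).obj (ModuleCat.of R R)
/-- `p_1^* E = S ⊗_R E` -/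
abbrev P0 : ModuleCat.{u} (R ⊗[k] R) := ModuleCat.of (R ⊗[k] R) ((R ⊗[k] R) ⊗[R] E)

/-- The `S`-linear projection `P0 ⟶ Δ_* E`. -/
def pi0 : P0 k R E ⟶ DE k R E := ModuleCat.ofHom (Y := ↑(DE k R E))
  { toFun := piR k R E
    map_add' := map_add _
    map_smul' s x := piR_smul k R E s x }

@[simp] lemma pi0_apply (x : (R ⊗[k] R) ⊗[R] E) : pi0 k R E x = piR k R E x := rfl

instance : Projective (P0 k R E) :=
  (IsProjective.iff_projective _).mp inferInstance

instance : Epi (pi0 k R E) := by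
  rw [ModuleCat.epi_iff_surjective]
  exact piR_surjective k R E

/-- the span of the elements `(1 ⊗ r - r ⊗ 1) ⊗ e` -/
def T : Submodule (R ⊗[k] R) ((R ⊗[k] R) ⊗[R] E) :=
  Submodule.span _ {x | ∃ r e, x = tee k R r ⊗ₜ e}

lemma tee_tmul_mem_ker (r : R) (e : E) : tee k R r ⊗ₜ e ∈ LinearMap.ker (pi0 k R E).hom := by
  rw [LinearMap.mem_ker]
  show piR k R E (tee k R r ⊗ₜ e) = 0
  rw [piR_tmul, mu_tee, zero_smul]

lemma T_le_ker : T k R E ≤ LinearMap.ker (pi0 k R E).hom := by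
  rw [T, Submodule.span_le]
  rintro x ⟨r, e, rfl⟩
  exact tee_tmul_mem_ker k R E r e

lemma sub_mem_T (w : R ⊗[k] R) (e : E) :
    (w - algebraMap R (R ⊗[k] R) (mu k R w)) ⊗ₜ e ∈ T k R E := by
  induction w using TensorProduct.induction_on with
  | zero => simp
  | tmul a b =>
      have h1 : (a ⊗ₜ[k] b - algebraMap R (R ⊗[k] R) (mu k R (a ⊗ₜ b)))
          = (a ⊗ₜ[k] (1:R)) * tee k R b := by
        simp [tee, mul_sub, Algebra.TensorProduct.tmul_mul_tmul,
          Algebra.TensorProduct.algebraMap_apply]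
      rw [h1, ← smul_eq_mul, ← smul_tmul']
      exact Submodule.smul_mem _ _ (Submodule.subset_span ⟨b, e, rfl⟩)
  | add x y hx hy =>
      have : (x + y - algebraMap R (R ⊗[k] R) (mu k R (x + y))) ⊗ₜ[R] e
          = (x - algebraMap R (R ⊗[k] R) (mu k R x)) ⊗ₜ e
            + (y - algebraMap R (R ⊗[k] R) (mu k R y)) ⊗ₜ e := by
        rw [← add_tmul]; congr 1; rw [map_add, map_add]; ring
      rw [this]
      exact Submodule.add_mem _ hx hy

lemma sub_one_tmul_mem_T (x : (R ⊗[k] R) ⊗[R] E) :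
    x - (1 : R ⊗[k] R) ⊗ₜ (piR k R E x) ∈ T k R E := by
  induction x using TensorProduct.induction_on with
  | zero => simp
  | tmul w e =>
      have h1 : (1 : R ⊗[k] R) ⊗ₜ[R] (piR k R E (w ⊗ₜ e))
          = algebraMap R (R ⊗[k] R) (mu k R w) ⊗ₜ e := by
        rw [piR_tmul, tmul_smul, smul_tmul', Algebra.smul_def, mul_one]
      rw [h1, ← sub_tmul]
      exact sub_mem_T k R E w e
  | add x y hx hy =>
      have : x + y - (1 : R ⊗[k] R) ⊗ₜ (piR k R E (x + y))
          = (x - (1 : R ⊗[k] R) ⊗ₜ (piR k R E x))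
            + (y - (1 : R ⊗[k] R) ⊗ₜ (piR k R E y)) := by
        rw [map_add, tmul_add]; abel
      rw [this]
      exact Submodule.add_mem _ hx hy

lemma ker_le_T : LinearMap.ker (pi0 k R E).hom ≤ T k R E := by
  intro x hx
  have hx' : piR k R E x = 0 := hx
  have := sub_one_tmul_mem_T k R E x
  rwa [hx', tmul_zero, sub_zero] at this

lemma hom_vanish_on_T (ψ : P0 k R E ⟶ DO k R) (x : (R ⊗[k] R) ⊗[R] E)
    (hx : x ∈ T k R E) : ψ x = 0 := by
  induction hx using Submodule.span_induction with
  | mem y hy =>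
      obtain ⟨r, e, rfl⟩ := hy
      have h1 : tee k R r ⊗ₜ[R] e = tee k R r • ((1 : R ⊗[k] R) ⊗ₜ[R] e) := by
        rw [smul_tmul', smul_eq_mul, mul_one]
      rw [h1, map_smul]
      show mu k R (tee k R r) • (show R from ψ ((1 : R ⊗[k] R) ⊗ₜ[R] e)) = 0
      rw [mu_tee, zero_smul]
  | zero => simp
  | add y z _ _ ihy ihz => rw [map_add, ihy, ihz, add_zero]
  | smul s y _ ihy =>
      rw [map_smul, ihy]; exact smul_zero s

/-- every `S`-linear map `P0 → Δ_* O` kills the kernel of `pi0` -/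
lemma hom_vanish_on_ker (ψ : P0 k R E ⟶ DO k R) (x : (R ⊗[k] R) ⊗[R] E)
    (hx : x ∈ LinearMap.ker (pi0 k R E).hom) : ψ x = 0 :=
  hom_vanish_on_T k R E ψ x (ker_le_T k R E hx)


----------------------------------------------------------------
-- the equivalence Hom_S(K, ΔO) ≃+ Hom_R(E, Der_k R)

lemma tee_add (r r' : R) : tee k R (r + r') = tee k R r + tee k R r' := by
  simp only [tee, tmul_add, add_tmul]; abel

lemma tee_mul (a b : R) :
    tee k R (a * b) = ((1:R) ⊗ₜ[k] a) * tee k R b + (b ⊗ₜ[k] (1:R)) * tee k R a := by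
  simp only [tee, mul_sub, Algebra.TensorProduct.tmul_mul_tmul, mul_one, one_mul]
  rw [mul_comm b a]
  abel

lemma tee_one : tee k R 1 = 0 := by simp [tee]

lemma tee_algebraMap (c : k) : tee k R (algebraMap k R c) = 0 := by
  rw [tee, Algebra.algebraMap_eq_smul_one, tmul_smul, ← smul_tmul', sub_self]

/-- identity coercion to make elaboration happy -/
def dval {k : Type u} [Field k] {R : Type u} [CommRing R] [Algebra k R] (y : DO k R) : R := y

@[simp] lemma dval_add {y z : DO k R} : dval (y + z) = dval y + dval z := rfl
@[simp] lemma dval_zero : dval (0 : DO k R) = 0 := rfl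
lemma dval_smul (s : R ⊗[k] R) (y : DO k R) : dval (s • y) = mu k R s * dval y := rfl
lemma dval_inj {y z : DO k R} (h : dval y = dval z) : y = z := h

section f

variable {k R E}
variable (f : ↥(LinearMap.ker (pi0 k R E).hom) →ₗ[R ⊗[k] R] DO k R)

lemma fker_add (x y : (R ⊗[k] R) ⊗[R] E) (hx : x ∈ LinearMap.ker (pi0 k R E).hom)
    (hy : y ∈ LinearMap.ker (pi0 k R E).hom) (hxy : x + y ∈ LinearMap.ker (pi0 k R E).hom) :
    dval (f ⟨x + y, hxy⟩) = dval (f ⟨x, hx⟩) + dval (f ⟨y, hy⟩) := by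
  have : (⟨x + y, hxy⟩ : ↥(LinearMap.ker (pi0 k R E).hom)) = ⟨x, hx⟩ + ⟨y, hy⟩ := rfl
  rw [this, map_add]; rfl

lemma fker_smul (s : R ⊗[k] R) (x : (R ⊗[k] R) ⊗[R] E) (hx : x ∈ LinearMap.ker (pi0 k R E).hom)
    (hsx : s • x ∈ LinearMap.ker (pi0 k R E).hom) :
    dval (f ⟨s • x, hsx⟩) = mu k R s * dval (f ⟨x, hx⟩) := by
  have : (⟨s • x, hsx⟩ : ↥(LinearMap.ker (pi0 k R E).hom)) = s • ⟨x, hx⟩ := rfl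
  rw [this, map_smul]; rfl

lemma fker_congr (x y : (R ⊗[k] R) ⊗[R] E) (hx : x ∈ LinearMap.ker (pi0 k R E).hom) (h : x = y) :
    dval (f ⟨x, hx⟩) = dval (f ⟨y, h ▸ hx⟩) := by subst h; rfl

/-- the underlying function of `α f` -/
def alphaFun (e : E) (r : R) : R :=
  dval (f ⟨tee k R r ⊗ₜ e, tee_tmul_mem_ker k R E r e⟩)

lemma alphaFun_leibniz (a b : R) (e : E) :
    alphaFun f e (a * b) = a * alphaFun f e b + b * alphaFun f e a := by
  have mem1 : ((1:R) ⊗ₜ[k] a) • (tee k R b ⊗ₜ[R] e) ∈ LinearMap.ker (pi0 k R E).hom :=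
    Submodule.smul_mem _ _ (tee_tmul_mem_ker k R E b e)
  have mem2 : (b ⊗ₜ[k] (1:R)) • (tee k R a ⊗ₜ[R] e) ∈ LinearMap.ker (pi0 k R E).hom :=
    Submodule.smul_mem _ _ (tee_tmul_mem_ker k R E a e)
  have h1 : tee k R (a * b) ⊗ₜ[R] e
      = ((1:R) ⊗ₜ[k] a) • (tee k R b ⊗ₜ[R] e) + (b ⊗ₜ[k] (1:R)) • (tee k R a ⊗ₜ[R] e) := by
    rw [smul_tmul', smul_tmul', smul_eq_mul, smul_eq_mul, ← add_tmul, ← tee_mul]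
  unfold alphaFun
  rw [fker_congr f _ _ _ h1, fker_add f _ _ mem1 mem2,
    fker_smul f _ _ (tee_tmul_mem_ker k R E b e), fker_smul f _ _ (tee_tmul_mem_ker k R E a e),
    mu_tmul, mu_tmul, one_mul, mul_one]

lemma alphaFun_zero_of_tee_zero (e : E) (r : R) (h : tee k R r = 0) : alphaFun f e r = 0 := by
  unfold alphaFun
  rw [fker_congr f _ _ _ (by rw [h, zero_tmul])]
  show dval (f 0) = 0
  rw [map_zero]; rfl

/-- `α f e` as a derivation -/
def alphaDer (e : E) : Derivation k R R where
  toFun := alphaFun f e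
  map_add' r r' := by
    unfold alphaFun
    rw [fker_congr f _ _ _ (by rw [tee_add, add_tmul]),
      fker_add f _ _ (tee_tmul_mem_ker k R E r e) (tee_tmul_mem_ker k R E r' e)]
  map_smul' c r := by
    have h1 : c • r = algebraMap k R c * r := Algebra.smul_def c r
    show alphaFun f e (c • r) = c • alphaFun f e r
    rw [h1, alphaFun_leibniz,
      alphaFun_zero_of_tee_zero f e _ (tee_algebraMap k R c), mul_zero, add_zero,
      Algebra.smul_def]
  map_one_eq_zero' := alphaFun_zero_of_tee_zero f _ 1 (tee_one k R)
  leibniz' a b := by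
    show alphaFun f e (a * b) = a • alphaFun f e b + b • alphaFun f e a
    rw [alphaFun_leibniz, smul_eq_mul, smul_eq_mul]

@[simp] lemma alphaDer_apply (e : E) (r : R) : alphaDer f e r = alphaFun f e r := rfl

lemma mu_algebraMap (c : R) : mu k R (algebraMap R (R ⊗[k] R) c) = c := by
  rw [Algebra.TensorProduct.algebraMap_apply, mu_tmul]
  simp

/-- `α f` -/
def alpha : E →ₗ[R] Derivation k R R where
  toFun e := alphaDer f e
  map_add' e e' := by
    ext r
    show alphaFun f (e + e') r = alphaFun f e r + alphaFun f e' r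
    unfold alphaFun
    rw [fker_congr f _ _ _ (by rw [tmul_add]),
      fker_add f _ _ (tee_tmul_mem_ker k R E r e) (tee_tmul_mem_ker k R E r e')]
  map_smul' c e := by
    ext r
    show alphaFun f (c • e) r = c • alphaFun f e r
    unfold alphaFun
    have h1 : tee k R r ⊗ₜ[R] (c • e) = (algebraMap R (R ⊗[k] R) c) • (tee k R r ⊗ₜ[R] e) := by
      rw [smul_tmul', ← smul_tmul, algebraMap_smul]
    rw [fker_congr f _ _ _ h1, fker_smul f _ _ (tee_tmul_mem_ker k R E r e), mu_algebraMap,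
      smul_eq_mul]

end f

----------------------------------------------------------------
-- β : Hom_R(E, Der) → Hom_S(K, ΔO)

section beta

variable {k R E}
variable (D : E →ₗ[R] Derivation k R R)

/-- `b ↦ (e ↦ D e b)` -/
def dflip : R →ₗ[k] (E →ₗ[R] R) where
  toFun b :=
    { toFun := fun e => D e b
      map_add' := fun e e' => by show D (e + e') b = D e b + D e' b; rw [map_add]; rfl
      map_smul' := fun c e => by show D (c • e) b = _; rw [map_smul]; rfl }
  map_add' b b' := by ext e; exact (D e).map_add b b'
  map_smul' c b := by ext e; exact (D e).map_smul c b

@[simp] lemma dflip_apply (b : R) (e : E) : dflip D b e = D e b := rfl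

/-- `(a ⊗ b, e) ↦ a * D e b` -/
def bilB : (R ⊗[k] R) →ₗ[R] (E →ₗ[R] R) :=
  AlgebraTensorModule.lift (LinearMap.toSpanSingleton R (R →ₗ[k] (E →ₗ[R] R)) (dflip D))

@[simp] lemma bilB_tmul (a b : R) (e : E) : bilB D (a ⊗ₜ b) e = a * D e b := by
  simp [bilB, LinearMap.toSpanSingleton]

def Fmap : ((R ⊗[k] R) ⊗[R] E) →ₗ[R] R := TensorProduct.lift (bilB D)

@[simp] lemma Fmap_tmul (w : R ⊗[k] R) (e : E) : Fmap D (w ⊗ₜ e) = bilB D w e := by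
  simp [Fmap]

lemma bilB_mul (s w : R ⊗[k] R) (e : E) :
    bilB D (s * w) e = mu k R s * bilB D w e + bilB D s (mu k R w • e) := by
  induction s using TensorProduct.induction_on with
  | zero => simp
  | add s s' ihs ihs' =>
      simp only [add_mul, map_add, LinearMap.add_apply]
      rw [ihs, ihs']
      ring
  | tmul a b =>
      induction w using TensorProduct.induction_on with
      | zero => simp
      | add w w' ihw ihw' =>
          simp only [mul_add, map_add, LinearMap.add_apply, add_smul]
          rw [ihw, ihw']
          ring
      | tmul c d =>
          rw [Algebra.TensorProduct.tmul_mul_tmul, bilB_tmul, bilB_tmul, bilB_tmul,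
            mu_tmul, mu_tmul, Derivation.leibniz, map_smul]
          show a * c * (b • D e d + d • D e b) = _ + a * ((c * d) • D e) b
          rw [Derivation.smul_apply, smul_eq_mul, smul_eq_mul, smul_eq_mul]
          ring

lemma Fmap_smul (s : R ⊗[k] R) (x : (R ⊗[k] R) ⊗[R] E) :
    Fmap D (s • x) = mu k R s * Fmap D x + bilB D s (piR k R E x) := by
  induction x using TensorProduct.induction_on with
  | zero => simp
  | tmul w e =>
      rw [smul_tmul', smul_eq_mul, Fmap_tmul, Fmap_tmul, piR_tmul]
      exact bilB_mul D s w e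
  | add x y ihx ihy =>
      rw [smul_add, map_add, map_add, map_add, ihx, ihy, map_add]
      ring

lemma Fmap_smul_ker (s : R ⊗[k] R) (x : (R ⊗[k] R) ⊗[R] E)
    (hx : x ∈ LinearMap.ker (pi0 k R E).hom) :
    Fmap D (s • x) = mu k R s * Fmap D x := by
  have hx' : piR k R E x = 0 := hx
  rw [Fmap_smul, hx', map_zero, add_zero]

/-- `β D` -/
def beta : ↥(LinearMap.ker (pi0 k R E).hom) →ₗ[R ⊗[k] R] DO k R where
  toFun κ := Fmap D κ.1
  map_add' κ κ' := Fmap D |>.map_add κ.1 κ'.1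
  map_smul' s κ := Fmap_smul_ker D s κ.1 κ.2

@[simp] lemma beta_apply (κ : ↥(LinearMap.ker (pi0 k R E).hom)) :
    dval (beta D κ) = Fmap D κ.1 := rfl

lemma Fmap_tee (r : R) (e : E) : Fmap D (tee k R r ⊗ₜ e) = D e r := by
  rw [tee, sub_tmul, map_sub, Fmap_tmul, Fmap_tmul, bilB_tmul, bilB_tmul,
    Derivation.map_one_eq_zero, one_mul, mul_zero, sub_zero]

end beta

----------------------------------------------------------------
-- the equivalence

section equiv

variable {k R E}

lemma ker_hom_ext (g₁ g₂ : ↥(LinearMap.ker (pi0 k R E).hom) →ₗ[R ⊗[k] R] DO k R)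
    (h : ∀ (r : R) (e : E),
      g₁ ⟨tee k R r ⊗ₜ e, tee_tmul_mem_ker k R E r e⟩
        = g₂ ⟨tee k R r ⊗ₜ e, tee_tmul_mem_ker k R E r e⟩) : g₁ = g₂ := by
  have main : ∀ (y) (hyT : y ∈ T k R E) (hyK : y ∈ LinearMap.ker (pi0 k R E).hom),
      g₁ ⟨y, hyK⟩ = g₂ ⟨y, hyK⟩ := by
    intro y hyT
    induction hyT using Submodule.span_induction with
    | mem z hz =>
        intro hzK
        obtain ⟨r, e, rfl⟩ := hz
        exact h r e
    | zero =>
        intro h0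
        have : (⟨0, h0⟩ : ↥(LinearMap.ker (pi0 k R E).hom)) = 0 := rfl
        rw [this, map_zero, map_zero]
    | add y z hyT hzT ihy ihz =>
        intro hK
        have hy := T_le_ker k R E hyT
        have hz := T_le_ker k R E hzT
        have : (⟨y + z, hK⟩ : ↥(LinearMap.ker (pi0 k R E).hom)) = ⟨y, hy⟩ + ⟨z, hz⟩ := rfl
        rw [this, map_add, map_add, ihy hy, ihz hz]
    | smul s y hyT ihy =>
        intro hK
        have hy := T_le_ker k R E hyT
        have : (⟨s • y, hK⟩ : ↥(LinearMap.ker (pi0 k R E).hom)) = s • ⟨y, hy⟩ := rfl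
        rw [this, map_smul, map_smul, ihy hy]
  ext ⟨x, hx⟩
  exact main x (ker_le_T k R E hx) hx

/-- the main algebraic equivalence `Hom_S(K, Δ_*O) ≃+ Hom_R(E, Der_k(R))` -/
def KDerEquiv : (↥(LinearMap.ker (pi0 k R E).hom) →ₗ[R ⊗[k] R] DO k R)
    ≃+ (E →ₗ[R] Derivation k R R) where
  toFun f := alpha f
  invFun D := beta D
  left_inv f := by
    apply ker_hom_ext
    intro r e
    apply dval_inj
    show Fmap (alpha f) (tee k R r ⊗ₜ e) = _
    rw [Fmap_tee]
    rfl
  right_inv D := by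
    ext e r
    show Fmap D (tee k R r ⊗ₜ e) = D e r
    rw [Fmap_tee]
  map_add' f g := by
    ext e r
    show dval ((f + g) _) = _
    rw [LinearMap.add_apply]
    rfl

end equiv

----------------------------------------------------------------
-- The projective resolution of Δ_* E

section resolution

abbrev KerM : ModuleCat.{u} (R ⊗[k] R) :=
  ModuleCat.of (R ⊗[k] R) ↥(LinearMap.ker (pi0 k R E).hom)

def X1 : ModuleCat.{u} (R ⊗[k] R) := Projective.over (KerM k R E)

def q1 : X1 k R E ⟶ KerM k R E := Projective.π _

instance : Projective (X1 k R E) := Projective.projective_over _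

lemma q1_surj : Function.Surjective (q1 k R E) := by
  rw [← ModuleCat.epi_iff_surjective]
  exact Projective.π_epi _

def d10 : X1 k R E ⟶ P0 k R E :=
  q1 k R E ≫ ModuleCat.ofHom (LinearMap.ker (pi0 k R E).hom).subtype

lemma d10_eq : (d10 k R E).hom = ((LinearMap.ker (pi0 k R E).hom).subtype).comp (q1 k R E).hom := rfl

lemma d10_apply (x : X1 k R E) :
    d10 k R E x = (LinearMap.ker (pi0 k R E).hom).subtype (q1 k R E x) := rfl

lemma d10_pi0 : d10 k R E ≫ pi0 k R E = 0 := by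
  ext x
  exact (show ↥(LinearMap.ker (pi0 k R E).hom) from q1 k R E x).2

lemma range_d10 : LinearMap.range (d10 k R E).hom = LinearMap.ker (pi0 k R E).hom := by
  rw [d10_eq, LinearMap.range_comp,
    LinearMap.range_eq_top.2 (q1_surj k R E), Submodule.map_top, Submodule.range_subtype]

lemma ker_d10 : LinearMap.ker (d10 k R E).hom = LinearMap.ker (q1 k R E).hom := by
  rw [d10_eq, LinearMap.ker_comp, Submodule.ker_subtype, Submodule.comap_bot]

/-- the chain complex underlying the projective resolution -/
def Cpx : ChainComplex (ModuleCat.{u} (R ⊗[k] R)) ℕ :=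
  ChainComplex.mk' (P0 k R E) (X1 k R E) (d10 k R E)
    (fun f => ⟨_, Projective.d f, (fun {S : ShortComplex (ModuleCat.{u} (R ⊗[k] R))} (_ : S.Exact) => S.zero) (exact_d_f f)⟩)

lemma Cpx_d_1_0 : (Cpx k R E).d 1 0 = d10 k R E := by
  simp [Cpx]

instance Cpx_projective (n : ℕ) : Projective ((Cpx k R E).X n) := by
  obtain (_ | _ | _ | n) := n
  · exact inferInstanceAs (Projective (P0 k R E))
  · exact inferInstanceAs (Projective (X1 k R E))
  · apply Projective.projective_over
  · apply Projective.projective_over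

lemma Cpx_exactAt_succ (n : ℕ) : (Cpx k R E).ExactAt (n + 1) := by
  rw [HomologicalComplex.exactAt_iff' _ (n + 1 + 1) (n + 1) n (by simp) (by simp)]
  dsimp [Cpx, HomologicalComplex.sc', HomologicalComplex.shortComplexFunctor',
      ChainComplex.mk', ChainComplex.mk]
  match n with
  | 0 => apply exact_d_f
  | n + 1 => simp only [ChainComplex.of.d, dif_pos, eqToHom_refl, Category.id_comp]; apply exact_d_f

lemma Cpx_exact0 : (ShortComplex.mk (d10 k R E) (pi0 k R E) (d10_pi0 k R E)).Exact := by
  rw [ShortComplex.moduleCat_exact_iff_range_eq_ker]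
  exact range_d10 k R E

/-- the projective resolution of `Δ_* E` -/
def Res : ProjectiveResolution (DE k R E) where
  complex := Cpx k R E
  projective := Cpx_projective k R E
  π := (ChainComplex.toSingle₀Equiv _ _).symm ⟨pi0 k R E, by
          rw [Cpx_d_1_0]; exact d10_pi0 k R E⟩
  quasiIso := ⟨fun n => by
    cases n with
    | zero =>
      rw [ChainComplex.quasiIsoAt₀_iff, ShortComplex.quasiIso_iff_of_zeros']
      · refine (ShortComplex.exact_and_epi_g_iff_of_iso ?_).2
          ⟨Cpx_exact0 k R E, inferInstance⟩
        exact ShortComplex.isoMk (Iso.refl _) (Iso.refl _) (Iso.refl _)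
          (by simp [Cpx]; exact (Category.id_comp _).trans (Category.comp_id _).symm)
            (by simp; exact (Category.id_comp _).trans (Category.comp_id _).symm)
      all_goals rfl
    | succ n =>
      rw [quasiIsoAt_iff_exactAt']
      · exact Cpx_exactAt_succ k R E n
      · apply ChainComplex.exactAt_succ_single_obj⟩

end resolution

----------------------------------------------------------------
-- computing `Ext¹` as homology of the Hom-complex

section homologycomp

/-- the Hom cochain complex -/
def Cc : CochainComplex (ModuleCat.{u} (R ⊗[k] R)) ℕ :=
  (Cpx k R E).linearYonedaObj (R ⊗[k] R) (DO k R)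

/-- the short complex computing `Ext¹` -/
def SC : ShortComplex (ModuleCat.{u} (R ⊗[k] R)) := (Cc k R E).sc' 0 1 2

def homologyIsoSC : (Cc k R E).homology 1 ≅ (SC k R E).homology :=
  HomologicalComplex.homologyIsoSc' _ 0 1 2 (by simp) (by simp)

def d21 : Projective.syzygies (d10 k R E) ⟶ X1 k R E := Projective.d (d10 k R E)

lemma Cpx_d_2_1 : (Cpx k R E).d 2 1 = d21 k R E := by
  simp [Cpx, ChainComplex.mk', d21]

/-- a nicely-typed version of `SC` -/
def SCn : ShortComplex (ModuleCat.{u} (R ⊗[k] R)) :=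
  ShortComplex.mk
    (0 : ModuleCat.of _ (P0 k R E ⟶ DO k R) ⟶ ModuleCat.of _ (X1 k R E ⟶ DO k R))
    (ModuleCat.ofHom (Linear.leftComp (R ⊗[k] R) (DO k R) (d21 k R E)))
    (by simp)

lemma SCf_eq_zero :
    Linear.leftComp (R ⊗[k] R) (DO k R) ((Cpx k R E).d 1 0) = 0 := by
  rw [Cpx_d_1_0]
  apply LinearMap.ext
  intro ψ
  show d10 k R E ≫ ψ = 0
  ext x
  show ψ (d10 k R E x) = 0
  exact hom_vanish_on_ker k R E ψ _
    (show ↥(LinearMap.ker (pi0 k R E).hom) from q1 k R E x).2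

/-- identification of the two short complexes -/
def SCIso : SC k R E ≅ SCn k R E := by
  refine ShortComplex.isoMk (Iso.refl _) (Iso.refl _) (Iso.refl _) ?_ ?_
  · show 𝟙 _ ≫ (SCn k R E).f = (SC k R E).f ≫ 𝟙 _
    rw [Category.comp_id, Category.id_comp]
    show (0 : _) = ModuleCat.ofHom (Linear.leftComp (R ⊗[k] R) (DO k R) ((Cpx k R E).d 1 0))
    rw [SCf_eq_zero]
    rfl
  · show 𝟙 _ ≫ (SCn k R E).g = (SC k R E).g ≫ 𝟙 _
    rw [Category.comp_id, Category.id_comp]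
    show ModuleCat.ofHom (Linear.leftComp (R ⊗[k] R) (DO k R) (d21 k R E))
      = ModuleCat.ofHom (Linear.leftComp (R ⊗[k] R) (DO k R) ((Cpx k R E).d 2 1))
    rw [Cpx_d_2_1]
    rfl

lemma range_d21 : LinearMap.range (d21 k R E).hom = LinearMap.ker (d10 k R E).hom :=
  (exact_d_f (d10 k R E)).moduleCat_range_eq_ker

lemma mem_kerSCn_iff (φ : X1 k R E ⟶ DO k R) :
    φ ∈ LinearMap.ker (SCn k R E).g.hom ↔ ∀ x, q1 k R E x = 0 → φ x = 0 := by
  change (SCn k R E).g.hom φ = 0 ↔ _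
  constructor
  · intro h x hx
    have hmem : x ∈ LinearMap.ker (d10 k R E).hom := by rw [ker_d10]; exact hx
    rw [← range_d21] at hmem
    obtain ⟨y, rfl⟩ := hmem
    exact congrArg (fun g : Projective.syzygies (d10 k R E) ⟶ DO k R => g y) h
  · intro hv
    apply ModuleCat.hom_ext
    apply LinearMap.ext
    intro y
    show φ (d21 k R E y) = 0
    apply hv
    rw [← LinearMap.mem_ker, ← ker_d10, ← range_d21]
    exact ⟨y, rfl⟩

lemma range_toCycles_n : LinearMap.range (SCn k R E).moduleCatToCycles = ⊥ := by
  rw [LinearMap.range_eq_bot]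
  apply LinearMap.ext
  intro ψ
  apply Subtype.ext
  show (SCn k R E).f ψ = 0
  rfl

lemma liftq_congr (φ : X1 k R E ⟶ DO k R) (hφ : ∀ x, q1 k R E x = 0 → φ x = 0)
    (y y' : X1 k R E) (h : q1 k R E y = q1 k R E y') : φ y = φ y' := by
  have h0 : φ (y - y') = 0 := hφ _ (by rw [map_sub, h, sub_self])
  rw [map_sub, sub_eq_zero] at h0
  exact h0

/-- factoring a morphism vanishing on `ker q1` through `q1` -/
def liftq (φ : X1 k R E ⟶ DO k R) (hφ : ∀ x, q1 k R E x = 0 → φ x = 0) :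
    ↥(LinearMap.ker (pi0 k R E).hom) →ₗ[R ⊗[k] R] DO k R where
  toFun κ := φ (Function.surjInv (q1_surj k R E) κ)
  map_add' κ κ' := by
    rw [← map_add]
    apply liftq_congr k R E φ hφ
    rw [map_add, Function.surjInv_eq (q1_surj k R E), Function.surjInv_eq (q1_surj k R E),
      Function.surjInv_eq (q1_surj k R E)]
  map_smul' s κ := by
    rw [← map_smul]
    apply liftq_congr k R E φ hφ
    rw [map_smul, Function.surjInv_eq (q1_surj k R E), Function.surjInv_eq (q1_surj k R E)]
    rfl

lemma liftq_apply (φ : X1 k R E ⟶ DO k R) (hφ) (x : X1 k R E) :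
    liftq k R E φ hφ (q1 k R E x) = φ x := by
  apply liftq_congr k R E φ hφ
  rw [Function.surjInv_eq (q1_surj k R E)]

/-- coercion helper -/
def el2hom (φ : ↑((SCn k R E).X₂)) : X1 k R E ⟶ DO k R := φ

lemma comp_liftq (φ : X1 k R E ⟶ DO k R) (hφ) :
    q1 k R E ≫ ModuleCat.ofHom (Y := ↑(DO k R)) (liftq k R E φ hφ) = φ := by
  ext x
  exact liftq_apply k R E φ hφ x

set_option maxHeartbeats 1000000 in
/-- `ker (SCn.g) ≃+ Hom_S(K, Δ_*O)` -/
def kerSCgEquiv : ↥(LinearMap.ker (SCn k R E).g.hom)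
    ≃+ (↥(LinearMap.ker (pi0 k R E).hom) →ₗ[R ⊗[k] R] DO k R) where
  toFun φ := liftq k R E (el2hom k R E φ.1) ((mem_kerSCn_iff k R E _).1 φ.2)
  invFun f := ⟨q1 k R E ≫ ModuleCat.ofHom (Y := ↑(DO k R)) f, by
    refine (mem_kerSCn_iff k R E _).2 ?_
    intro x hx
    show f (q1 k R E x) = 0
    rw [hx, map_zero]⟩
  left_inv φ := Subtype.ext (comp_liftq k R E (el2hom k R E φ.1) _)
  right_inv f := by
    apply LinearMap.ext
    intro κ
    obtain ⟨x, rfl⟩ := q1_surj k R E κ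
    exact liftq_apply k R E _ _ x
  map_add' φ φ' := by
    apply LinearMap.ext
    intro κ
    obtain ⟨x, rfl⟩ := q1_surj k R E κ
    show liftq k R E (el2hom k R E (φ + φ').1) ((mem_kerSCn_iff k R E _).1 (φ + φ').2)
        (q1 k R E x)
      = liftq k R E (el2hom k R E φ.1) ((mem_kerSCn_iff k R E _).1 φ.2) (q1 k R E x)
        + liftq k R E (el2hom k R E φ'.1) ((mem_kerSCn_iff k R E _).1 φ'.2) (q1 k R E x)
    rw [liftq_apply, liftq_apply, liftq_apply]
    rfl

end homologycomp

----------------------------------------------------------------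
-- final assembly

section final

/-- the chain of isomorphisms computing `Ext¹` -/
def extEquiv : ↑((((Ext (R ⊗[k] R) (ModuleCat.{u} (R ⊗[k] R)) 1).obj (op (DE k R E))).obj
      (DO k R))) ≃+ (E →ₗ[R] Derivation k R R) :=
  (((Res k R E).isoExt 1 (DO k R)).toLinearEquiv.toAddEquiv.trans
    ((homologyIsoSC k R E).toLinearEquiv.toAddEquiv)).trans <|
  (((ShortComplex.homologyMapIso (SCIso k R E)).toLinearEquiv.toAddEquiv).trans
    (((SCn k R E).moduleCatHomologyIso.toLinearEquiv.toAddEquiv))).trans <|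
  (((Submodule.quotEquivOfEqBot _ (range_toCycles_n k R E)).toAddEquiv).trans
    ((kerSCgEquiv k R E))).trans (KDerEquiv (k := k) (R := R) (E := E))

lemma extR_eq_zero
    (a : ↑((((Ext R (ModuleCat.{u} R) 1).obj (op (ModuleCat.of R E))).obj
      (ModuleCat.of R R)))) : a = 0 := by
  haveI : Projective (ModuleCat.of R E) := (IsProjective.iff_projective _).mp inferInstance
  have h := isZero_Ext_succ_of_projective (R := R) (ModuleCat.of R E) (ModuleCat.of R R) 0
  have hid : 𝟙 (((Ext R (ModuleCat.{u} R) 1).obj (op (ModuleCat.of R E))).obj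
      (ModuleCat.of R R)) = 0 := h.eq_of_src _ _
  calc a = (𝟙 (((Ext R (ModuleCat.{u} R) 1).obj (op (ModuleCat.of R E))).obj
      (ModuleCat.of R R))) a := rfl
    _ = 0 := by rw [hid]; rfl

instance : Unique (↑((((Ext R (ModuleCat.{u} R) 1).obj (op (ModuleCat.of R E))).obj
    (ModuleCat.of R R)))) where
  default := 0
  uniq a := extR_eq_zero R E a

/-- the full equivalence -/
def fullEquiv : ↑((((Ext (R ⊗[k] R) (ModuleCat.{u} (R ⊗[k] R)) 1).obj (op (DE k R E))).obj
      (DO k R)))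
    ≃+ ((E →ₗ[R] Derivation k R R) ×
      ↑((((Ext R (ModuleCat.{u} R) 1).obj (op (ModuleCat.of R E))).obj (ModuleCat.of R R)))) :=
  (extEquiv k R E).trans (AddEquiv.prodUnique (M := E →ₗ[R] Derivation k R R)).symm

end final

end Stmt8

theorem stmt8 (k : Type u) [Field k] (R : Type u) [CommRing R] [Algebra k R]
    -- `X = Spec R` is a smooth variety over `k`
    [Algebra.FormallySmooth k R] [Algebra.FiniteType k R]
    -- `E` is a locally free `O_X`-module of finite rank
    (E : Type u) [AddCommGroup E] [Module R E] [Module.Finite R E] [Module.Projective R E] :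
    -- the multiplication map `O_{X×X} → O_X` defining the diagonal
    let μ : (R ⊗[k] R) →+* R := (Algebra.TensorProduct.lmul' k (S := R)).toRingHom
    -- `Δ_* E` and `Δ_* O_X` as `O_{X×X}`-modules
    let ΔE : ModuleCat.{u} (R ⊗[k] R) :=
      (ModuleCat.restrictScalars μ).obj (ModuleCat.of R E)
    let ΔO : ModuleCat.{u} (R ⊗[k] R) :=
      (ModuleCat.restrictScalars μ).obj (ModuleCat.of R R)
    Nonempty
      ((((Ext (R ⊗[k] R) (ModuleCat.{u} (R ⊗[k] R)) 1).obj (op ΔE)).obj ΔO)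
        ≃+
       ((E →ₗ[R] Derivation k R R) ×
        (((Ext R (ModuleCat.{u} R) 1).obj (op (ModuleCat.of R E))).obj
          (ModuleCat.of R R)))) := by
  intro μ ΔE ΔO
  exact ⟨Stmt8.fullEquiv k R E⟩

end
end
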